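/- Vanishing at the G₂ point: the universal quantum dimension Z(x,k,p,α,β,γ) of the Cartan product g^k·Y₂(β)^p, given by the product Z = F(x,k,p)·A(x,k+p)·B̃(x,p)·C₁(x,k+2p)·C₂(x,k) of the explicit sinh-factors defined in the paper, satisfies Z(x,k,p,−2,10/3,8/3) = 0 for all integers k ≥ 0 and p ≥ 2; equivalently, one sinh factor in the numerator vanishes identically at (α,β,γ)=(−2,10/3,8/3) when p ≥ 2. -/
import Mathlib


/-- Contribution B(x,n,α,β,γ) of the roots with unit scalar product with θ
(Section 2 of the paper). -/
noncomputable def Bfac (x : ℝ) (n : ℕ) (a b g : ℝ) : ℝ :=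
  ∏ j ∈ Finset.range n,
    (Real.sinh ((g + 2*b - ((j:ℝ) + 1 - 3) * a) * x / 4) /
        Real.sinh ((g - ((j:ℝ) + 1 - 1) * a) * x / 4)) *
    (Real.sinh ((2*g + b - ((j:ℝ) + 1 - 3) * a) * x / 4) /
        Real.sinh ((b - ((j:ℝ) + 1 - 1) * a) * x / 4)) *
    (Real.sinh ((2*g + 2*b - ((j:ℝ) + 1 - 4) * a) * x / 4) /
        Real.sinh (-((j:ℝ) + 1) * a * x / 4))

/-- Contribution A(x,n,α,β,γ) of the black roots. -/
noncomputable def Afac (x : ℝ) (n : ℕ) (a b g : ℝ) : ℝ :=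
  ∏ j ∈ Finset.range n,
    (Real.sinh ((2*g + 3*a - ((j:ℝ) + 1) * a) * x / 4) /
        Real.sinh ((2*b + a - ((j:ℝ) + 1) * a) * x / 4)) *
    (Real.sinh ((2*g + b + 4*a - ((j:ℝ) + 1) * a) * x / 4) /
        Real.sinh ((b - ((j:ℝ) + 1) * a) * x / 4)) *
    (Real.sinh ((2*b + g + 3*a - ((j:ℝ) + 1) * a) * x / 4) /
        Real.sinh ((g + a - ((j:ℝ) + 1) * a) * x / 4))

/-- Contribution C₁(x,n,α,β,γ) of the green roots. -/
noncomputable def C1fac (x : ℝ) (n : ℕ) (a b g : ℝ) : ℝ :=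
  ∏ j ∈ Finset.range n,
    Real.sinh ((2*b + 2*g + 4*a - ((j:ℝ) + 1) * a) * x / 4) /
      Real.sinh ((2*g + 3*a - ((j:ℝ) + 1) * a) * x / 4)

/-- Contribution C₂(x,n,α,β,γ) of the red roots. -/
noncomputable def C2fac (x : ℝ) (n : ℕ) (a b : ℝ) : ℝ :=
  ∏ j ∈ Finset.range n,
    Real.sinh ((-a - 2*b + a * ((j:ℝ) + 1)) * x / 4) /
      Real.sinh (a * ((j:ℝ) + 1) * x / 4)

/-- Contribution F(x,k,l,α,β,γ) of g₂₀, g₀₂ and the remaining colored roots. -/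
noncomputable def Ffac (x : ℝ) (k l : ℕ) (a b g : ℝ) : ℝ :=
  (Real.sinh ((2*b + 2*g - (2*(k:ℝ) + 2*(l:ℝ) - 3) * a) * x / 4) /
      Real.sinh ((2*b + 2*g + 3*a) * x / 4)) *
  (Real.sinh ((2*g - (2*(l:ℝ) - 3) * a) * x / 4) / Real.sinh ((2*g + 3*a) * x / 4)) *
  (Real.sinh ((b + 2*g - ((k:ℝ) + 2*(l:ℝ) - 3) * a) * x / 4) /
      Real.sinh ((b + 2*g + 3*a) * x / 4)) *
  (Real.sinh ((b - (k:ℝ) * a) * x / 4) / Real.sinh (b * x / 4))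

/-- Universal quantum dimension Z(x,k,l,α,β,γ) of the Cartan product
gᵏ·Y₂(β)ˡ: Z = F·A·B̃·C₁·C₂, with B̃(x,l,α,β,γ) = B(x,l,α,β,γ−β). -/
noncomputable def Zdim (x : ℝ) (k l : ℕ) (a b g : ℝ) : ℝ :=
  Ffac x k l a b g * Afac x (k + l) a b g * Bfac x l a b (g - b) *
    C1fac x (k + 2*l) a b g * C2fac x k a b

/-- Vanishing at the G₂ point: Z(x,k,p,−2,10/3,8/3) = 0 for all k ≥ 0, p ≥ 2. -/
theorem stmt_16 (x : ℝ) (k p : ℕ) (hp : 2 ≤ p) :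
    Zdim x k p (-2) (10/3) (8/3) = 0 := by
  have hB : Bfac x p (-2) (10/3) (8/3 - 10/3) = 0 := by
    unfold Bfac
    apply Finset.prod_eq_zero (Finset.mem_range.mpr (show 1 < p by omega))
    norm_num
  simp [Zdim, hB]
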